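/- The involutions ι_m and ι_r preserve the set of type 2 sign patterns of length d+1: a sign pattern σ is of type 2 if and only if ι_m(σ) is of type 2, and if and only if ι_r(σ) is of type 2. -/

import Mathlib

open Polynomial

/-- A sign pattern of length `d+1`, encoded as a function `ℕ → ℝ`:
its relevant values are at positions `0, …, d` (position `k` carries the sign of the
coefficient of `x^(d-k)`), each equal to `1` or `-1`, and the leading sign is `+1`. -/
def IsSignPattern (d : ℕ) (sp : ℕ → ℝ) : Prop :=
  sp 0 = 1 ∧ ∀ k ≤ d, sp k = 1 ∨ sp k = -1

/-- `P` is a monic hyperbolic polynomial of degree `d` (it splits into real linear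
factors `∏ (X - γ j)`), all of whose coefficients are nonzero, whose roots
`γ 0, …, γ (d-1)` are listed so that their moduli are strictly increasing
(in particular the moduli of the roots are pairwise distinct). -/
def HypOrdered (d : ℕ) (P : Polynomial ℝ) (γ : Fin d → ℝ) : Prop :=
  P = ∏ j : Fin d, (X - C (γ j)) ∧
  (∀ j ≤ d, P.coeff j ≠ 0) ∧
  StrictMono (fun j : Fin d => |γ j|)

/-- The monic degree-`d` polynomial `P` realizes the sign pattern `sp`:
for `k = 0, …, d` the sign of the coefficient of `x^(d-k)` is `sp k`. -/
def Realizes (d : ℕ) (P : Polynomial ℝ) (sp : ℕ → ℝ) : Prop :=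
  ∀ k ≤ d, 0 < sp k * P.coeff (d - k)

/-- The moduli of the roots `γ 0 < … < γ (d-1)` (listed by increasing modulus) of `P`
are in the canonical order: the root of `(i+1)`-th smallest modulus is negative exactly
when `a_(i+1) · a_i > 0`. -/
def CanonicalOrder (d : ℕ) (P : Polynomial ℝ) (γ : Fin d → ℝ) : Prop :=
  ∀ i : Fin d, (γ i < 0 ↔ 0 < P.coeff ((i : ℕ) + 1) * P.coeff (i : ℕ))

/-- A sign pattern is canonical if every monic hyperbolic polynomial with all
coefficients nonzero and pairwise distinct moduli of roots realizing it has its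
moduli of roots in the canonical order. -/
def IsCanonical (d : ℕ) (sp : ℕ → ℝ) : Prop :=
  ∀ (P : Polynomial ℝ) (γ : Fin d → ℝ),
    HypOrdered d P γ → Realizes d P sp → CanonicalOrder d P γ

/-- `sp` is the sign pattern `Σ_{m 0, …, m (s-1)}` of length `d+1`: it consists of
`m 0` signs `+1`, followed by `m 1` signs `-1`, followed by `m 2` signs `+1`, and so on. -/
def IsSigmaOf (d s : ℕ) (m : ℕ → ℕ) (sp : ℕ → ℝ) : Prop :=
  (∀ i < s, 1 ≤ m i) ∧ (∑ i ∈ Finset.range s, m i = d + 1) ∧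
  ∀ i k : ℕ, i < s → (∑ j ∈ Finset.range i, m j) ≤ k →
    k < (∑ j ∈ Finset.range (i + 1), m j) → sp k = (-1) ^ i

/-- A sign pattern `sp` of length `d+1` is of type 2 if, writing it as
`Σ_{m 0, …, m (s-1)}`, (i) no two consecutive components are both larger than `1`,
and (ii) no interior component equals `2`. -/
def Type2 (d : ℕ) (sp : ℕ → ℝ) : Prop :=
  ∃ (s : ℕ) (m : ℕ → ℕ), IsSigmaOf d s m sp ∧
    (∀ i, i + 1 < s → m i ≤ 1 ∨ m (i + 1) ≤ 1) ∧
    (∀ i, 1 ≤ i → i + 1 < s → m i ≠ 2)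

/-- The involution `ι_m`: the `k`-th entry (0-based) becomes `(-1)^k` times itself;
it corresponds to passing from `P` to `(-1)^d · P(-x)`. -/
def iotaM (sp : ℕ → ℝ) : ℕ → ℝ := fun k => (-1) ^ k * sp k

/-- The involution `ι_r`: the sign pattern is reversed and normalized so as to begin
with `+1`; it corresponds to passing from `P` to `x^d · P(1/x) / P(0)`. -/
def iotaR (d : ℕ) (sp : ℕ → ℝ) : ℕ → ℝ := fun k => sp d * sp (d - k)

/-!
Record the sign changes of a pattern as the predicate `c k := sp k ≠ sp (k + 1)`, `k < d`.
A pattern is of type 2 iff `c` contains no alternating triple: (no change, change, no change)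
at `k, k + 1, k + 2` means two adjacent blocks of length at least 2, and (change, no change,
change) an interior block of length exactly 2. The involution `ι_m` negates `c` and `ι_r`
reverses it, and neither operation creates an alternating triple.
-/

def blockStart (m : ℕ → ℕ) (i : ℕ) : ℕ := ∑ j ∈ Finset.range i, m j

@[simp]
lemma blockStart_zero (m : ℕ → ℕ) : blockStart m 0 = 0 := rfl

lemma blockStart_succ (m : ℕ → ℕ) (i : ℕ) : blockStart m (i + 1) = blockStart m i + m i :=
  Finset.sum_range_succ m i

lemma blockStart_mono (m : ℕ → ℕ) : Monotone (blockStart m) :=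
  monotone_nat_of_le_succ fun i => by simp [blockStart_succ]

lemma blockStart_update_of_le {m : ℕ → ℕ} {t i : ℕ} (v : ℕ) (hi : i ≤ t) :
    blockStart (Function.update m t v) i = blockStart m i :=
  Finset.sum_congr rfl fun j hj =>
    Function.update_of_ne (by simp at hj; omega) v m

lemma blockStart_update_succ (m : ℕ → ℕ) (t v : ℕ) :
    blockStart (Function.update m t v) (t + 1) = blockStart m t + v := by
  rw [blockStart_succ, blockStart_update_of_le v le_rfl, Function.update_self]

lemma exists_le_lt_succ_of_le_of_lt (f : ℕ → ℕ) {k s : ℕ} (h0 : f 0 ≤ k) (hs : k < f s) :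
    ∃ i < s, f i ≤ k ∧ k < f (i + 1) := by
  induction s with
  | zero => omega
  | succ s ih =>
    by_cases hk : k < f s
    · obtain ⟨i, hi, hik⟩ := ih hk
      exact ⟨i, by omega, hik⟩
    · exact ⟨s, by omega, by omega, hs⟩

lemma lt_of_blockStart_le {m : ℕ → ℕ} {d s i : ℕ} (hsum : blockStart m s = d + 1)
    (hi : blockStart m i ≤ d) : i < s :=
  (blockStart_mono m).reflect_lt (by omega)

lemma notMem_range_blockStart {m : ℕ → ℕ} {i k : ℕ} (hlo : blockStart m i < k)
    (hhi : k < blockStart m (i + 1)) : k ∉ Set.range (blockStart m) :=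
  fun ⟨j, hj⟩ => (blockStart_mono m).ne_of_lt_of_lt_nat i hlo hhi j hj

lemma isSigmaOf_iff {d s : ℕ} {m : ℕ → ℕ} {sp : ℕ → ℝ} :
    IsSigmaOf d s m sp ↔ (∀ i < s, 1 ≤ m i) ∧ blockStart m s = d + 1 ∧
      ∀ i k, i < s → blockStart m i ≤ k → k < blockStart m (i + 1) → sp k = (-1) ^ i :=
  Iff.rfl

namespace IsSigmaOf

variable {d s t : ℕ} {m : ℕ → ℕ} {sp : ℕ → ℝ}

lemma blockStart_eq (h : IsSigmaOf d s m sp) : blockStart m s = d + 1 := h.2.1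

lemma apply_eq (h : IsSigmaOf d s m sp) {i k : ℕ} (hi : i < s) (hlo : blockStart m i ≤ k)
    (hhi : k < blockStart m (i + 1)) : sp k = (-1) ^ i :=
  h.2.2 i k hi hlo hhi

lemma exists_block (h : IsSigmaOf d s m sp) {k : ℕ} (hk : k ≤ d) :
    ∃ i < s, blockStart m i ≤ k ∧ k < blockStart m (i + 1) :=
  exists_le_lt_succ_of_le_of_lt _ (Nat.zero_le k) (by rw [h.blockStart_eq]; omega)

lemma apply_last (h : IsSigmaOf d (t + 1) m sp) : sp d = (-1) ^ t := by
  have hsum := h.blockStart_eq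
  have := h.1 t (by omega)
  rw [blockStart_succ] at hsum
  exact h.apply_eq (by omega) (by omega) (by rw [blockStart_succ]; omega)

lemma ne_succ_iff (h : IsSigmaOf d s m sp) {k : ℕ} (hk : k < d) :
    sp k ≠ sp (k + 1) ↔ k + 1 ∈ Set.range (blockStart m) := by
  obtain ⟨i, hi, hlo, hhi⟩ := h.exists_block hk.le
  rw [h.apply_eq hi hlo hhi]
  by_cases hb : k + 1 = blockStart m (i + 1)
  · have hi' : i + 1 < s := lt_of_blockStart_le h.blockStart_eq (by omega)
    have := h.1 (i + 1) hi'
    have hnext : k + 1 < blockStart m (i + 1 + 1) := by rw [blockStart_succ]; omega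
    rw [h.apply_eq hi' hb.ge hnext]
    simp only [pow_succ, mul_neg_one, ne_eq, Set.mem_range]
    exact iff_of_true (by rw [self_eq_neg]; positivity) ⟨i + 1, hb.symm⟩
  · rw [h.apply_eq hi (by omega) (by omega)]
    exact iff_of_false (by simp) (notMem_range_blockStart (i := i) (by omega) (by omega))

lemma snoc_of_eq (h : IsSigmaOf d (t + 1) m sp) (heq : sp (d + 1) = sp d) :
    IsSigmaOf (d + 1) (t + 1) (Function.update m t (m t + 1)) sp := by
  have hsum := h.blockStart_eq
  have hlast := blockStart_update_succ m t (m t + 1)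
  rw [blockStart_succ] at hsum
  refine isSigmaOf_iff.2 ⟨fun i hi => ?_, by omega, fun i k hi hlo hhi => ?_⟩
  · rcases eq_or_ne i t with rfl | hit
    · simp only [Function.update_self]; omega
    · rw [Function.update_of_ne hit]
      exact h.1 i hi
  rw [blockStart_update_of_le _ (by omega)] at hlo
  obtain hit | rfl : i < t ∨ i = t := by omega
  · rw [blockStart_update_of_le _ (by omega)] at hhi
    exact h.apply_eq hi hlo hhi
  · rcases Nat.lt_or_ge k (d + 1) with hk | hk
    · exact h.apply_eq hi hlo (by rw [blockStart_succ]; omega)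
    · rw [show k = d + 1 by omega, heq, h.apply_last]

lemma snoc_of_eq_neg (h : IsSigmaOf d (t + 1) m sp) (hneg : sp (d + 1) = -sp d) :
    IsSigmaOf (d + 1) (t + 1 + 1) (Function.update m (t + 1) 1) sp := by
  have hsum := h.blockStart_eq
  have hlast := blockStart_update_succ m (t + 1) 1
  refine isSigmaOf_iff.2 ⟨fun i hi => ?_, by omega, fun i k hi hlo hhi => ?_⟩
  · rcases eq_or_ne i (t + 1) with rfl | hit
    · simp only [Function.update_self]; omega
    · rw [Function.update_of_ne hit]
      exact h.1 i (by omega)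
  rw [blockStart_update_of_le _ (by omega)] at hlo
  obtain hit | rfl : i < t + 1 ∨ i = t + 1 := by omega
  · rw [blockStart_update_of_le _ (by omega)] at hhi
    exact h.apply_eq hit hlo hhi
  · rw [show k = d + 1 by omega, hneg, h.apply_last, pow_succ, mul_neg_one]

end IsSigmaOf

def NoAlternatingTriple (n : ℕ) (c : ℕ → Prop) : Prop :=
  ∀ k, k + 2 < n → (c k ↔ c (k + 2)) → (c (k + 1) ↔ c k)

section NoAlternatingTriple

variable {n : ℕ} {c c' : ℕ → Prop}

lemma noAlternatingTriple_congr (h : ∀ k < n, c k ↔ c' k) :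
    NoAlternatingTriple n c ↔ NoAlternatingTriple n c' :=
  forall_congr' fun k => forall_congr' fun hk => by
    rw [h k (by omega), h (k + 1) (by omega), h (k + 2) hk]

lemma noAlternatingTriple_not :
    NoAlternatingTriple n (fun k => ¬ c k) ↔ NoAlternatingTriple n c := by
  simp only [NoAlternatingTriple, not_iff_not]

lemma NoAlternatingTriple.rev (hc : NoAlternatingTriple n c) :
    NoAlternatingTriple n (fun k => c (n - 1 - k)) := by
  intro k hk hiff
  have := hc (n - 1 - (k + 2)) (by omega)
  rw [show n - 1 - (k + 2) + 1 = n - 1 - (k + 1) by omega,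
    show n - 1 - (k + 2) + 2 = n - 1 - k by omega] at this
  exact (this hiff.symm).trans hiff.symm

lemma noAlternatingTriple_rev_iff :
    NoAlternatingTriple n (fun k => c (n - 1 - k)) ↔ NoAlternatingTriple n c := by
  refine ⟨fun h => ?_, NoAlternatingTriple.rev⟩
  refine (noAlternatingTriple_congr fun k hk => ?_).1 h.rev
  rw [show n - 1 - (n - 1 - k) = k by omega]

end NoAlternatingTriple

def IsType2Composition (s : ℕ) (m : ℕ → ℕ) : Prop :=
  (∀ i, i + 1 < s → m i ≤ 1 ∨ m (i + 1) ≤ 1) ∧ (∀ i, 1 ≤ i → i + 1 < s → m i ≠ 2)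

section Type2Composition

variable {d s : ℕ} {m : ℕ → ℕ}

lemma IsType2Composition.noAlternatingTriple (hm : IsType2Composition s m)
    (hpos : ∀ i < s, 1 ≤ m i) (hsum : blockStart m s = d + 1) :
    NoAlternatingTriple d (fun k => k + 1 ∈ Set.range (blockStart m)) := by
  intro k hk hiff
  by_contra hne
  by_cases hk2 : k + 2 ∈ Set.range (blockStart m)
  · have hk1 : k + 1 ∉ Set.range (blockStart m) := fun h => hne (iff_of_true hk2 h)
    have hk3 : k + 3 ∉ Set.range (blockStart m) := fun h => hk1 (hiff.2 h)
    obtain ⟨j, hj⟩ := hk2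
    obtain ⟨i, rfl⟩ : ∃ i, j = i + 1 :=
      Nat.exists_eq_add_one.2 (Nat.pos_of_ne_zero (by rintro rfl; simp at hj))
    have his : i + 1 < s := lt_of_blockStart_le hsum (by omega)
    have hmi : m i ≠ 1 := fun h => hk1 ⟨i, by rw [blockStart_succ, h] at hj; omega⟩
    have hmi' : m (i + 1) ≠ 1 := fun h => hk3 ⟨i + 2, by rw [blockStart_succ, hj, h]⟩
    have := hpos i (by omega)
    have := hpos (i + 1) his
    rcases hm.1 i his with h | h <;> omega
  · have hk1 : k + 1 ∈ Set.range (blockStart m) := by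
      by_contra h
      exact hne (iff_of_false hk2 h)
    obtain ⟨j', hj'⟩ := hiff.1 hk1
    obtain ⟨j, hj⟩ := hk1
    have hj0 : j ≠ 0 := by rintro rfl; simp at hj
    have hjs : j < s := lt_of_blockStart_le hsum (by omega)
    have hjj' : j + 1 ≤ j' := (blockStart_mono m).reflect_lt (by omega)
    have hle := blockStart_mono m hjj'
    have hmj : m j ≠ 1 := fun h => hk2 ⟨j + 1, by rw [blockStart_succ, hj, h]⟩
    have := hpos j hjs
    rw [blockStart_succ] at hle
    exact hm.2 j (by omega) (lt_of_blockStart_le hsum (by rw [blockStart_succ]; omega)) (by omega)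

lemma isType2Composition_of_noAlternatingTriple (hpos : ∀ i < s, 1 ≤ m i)
    (hsum : blockStart m s = d + 1)
    (hc : NoAlternatingTriple d (fun k => k + 1 ∈ Set.range (blockStart m))) :
    IsType2Composition s m := by
  have hle : ∀ i, i + 2 ≤ s → blockStart m (i + 2) ≤ d + 1 := fun i hi =>
    hsum ▸ blockStart_mono m hi
  constructor
  · intro i his
    by_contra! hm
    obtain ⟨k, hk⟩ : ∃ k, blockStart m (i + 1) = k + 2 :=
      ⟨blockStart m (i + 1) - 2, by rw [blockStart_succ]; omega⟩
    have hk' := hle i his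
    rw [blockStart_succ (i := i + 1), hk] at hk'
    have hk1 := notMem_range_blockStart (m := m) (i := i) (k := k + 1)
      (by rw [blockStart_succ] at hk; omega) (by omega)
    have hk3 := notMem_range_blockStart (m := m) (i := i + 1) (k := k + 3)
      (by omega) (by rw [blockStart_succ, hk]; omega)
    exact hk1 ((hc k (by omega) (iff_of_false hk1 hk3)).1 ⟨i + 1, hk⟩)
  · intro i hi1 his hm2
    obtain ⟨k, hk⟩ : ∃ k, blockStart m i = k + 1 := by
      have := blockStart_mono m hi1
      have := hpos 0 (by omega)
      exact ⟨blockStart m i - 1, by simp [blockStart_succ] at *; omega⟩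
    have hk3 : blockStart m (i + 1) = k + 3 := by rw [blockStart_succ, hk, hm2]
    have hk' := hle i his
    have := hpos (i + 1) his
    rw [blockStart_succ (i := i + 1), hk3] at hk'
    have hk2 := notMem_range_blockStart (m := m) (i := i) (k := k + 2) (by omega) (by omega)
    exact hk2 ((hc k (by omega) (iff_of_true ⟨i, hk⟩ ⟨i + 1, hk3⟩)).2 ⟨i, hk⟩)

end Type2Composition

namespace IsSignPattern

variable {d : ℕ} {sp : ℕ → ℝ}

lemma exists_isSigmaOf (hsp : IsSignPattern d sp) : ∃ t m, IsSigmaOf d (t + 1) m sp := by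
  induction d with
  | zero =>
    refine ⟨0, fun _ => 1, isSigmaOf_iff.2 ⟨fun _ _ => le_rfl, rfl, fun i k hi _ hk => ?_⟩⟩
    obtain rfl : i = 0 := by omega
    obtain rfl : k = 0 := by simpa [blockStart] using hk
    simpa using hsp.1
  | succ d ih =>
    obtain ⟨t, m, h⟩ := ih ⟨hsp.1, fun k hk => hsp.2 k (by omega)⟩
    have hsign : sp (d + 1) = sp d ∨ sp (d + 1) = -sp d := by
      rcases hsp.2 d (by omega) with h₁ | h₁ <;> rcases hsp.2 (d + 1) le_rfl with h₂ | h₂ <;>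
        simp [h₁, h₂]
    rcases hsign with heq | hneg
    · exact ⟨t, _, h.snoc_of_eq heq⟩
    · exact ⟨t + 1, _, h.snoc_of_eq_neg hneg⟩

lemma iotaM (hsp : IsSignPattern d sp) : IsSignPattern d (iotaM sp) := by
  refine ⟨by simp [_root_.iotaM, hsp.1], fun k hk => ?_⟩
  rcases hsp.2 k hk with h | h <;> rcases Nat.even_or_odd k with he | he <;>
    simp [_root_.iotaM, h, he.neg_one_pow]

lemma iotaR (hsp : IsSignPattern d sp) : IsSignPattern d (iotaR d sp) := by
  refine ⟨?_, fun k hk => ?_⟩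
  · rcases hsp.2 d le_rfl with h | h <;> simp [_root_.iotaR, h]
  · rcases hsp.2 d le_rfl with h | h <;> rcases hsp.2 (d - k) (by omega) with h' | h' <;>
      simp [_root_.iotaR, h, h']

lemma iotaM_ne_succ_iff (hsp : IsSignPattern d sp) {k : ℕ} (hk : k < d) :
    _root_.iotaM sp k ≠ _root_.iotaM sp (k + 1) ↔ ¬ sp k ≠ sp (k + 1) := by
  rcases hsp.2 k hk.le with h | h <;> rcases hsp.2 (k + 1) hk with h' | h' <;>
    rcases Nat.even_or_odd k with he | he <;>
    norm_num [_root_.iotaM, pow_succ, h, h', he.neg_one_pow]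

lemma iotaR_ne_succ_iff (hsp : IsSignPattern d sp) {k : ℕ} (hk : k < d) :
    _root_.iotaR d sp k ≠ _root_.iotaR d sp (k + 1) ↔
      sp (d - 1 - k) ≠ sp (d - 1 - k + 1) := by
  have hd : sp d ≠ 0 := by rcases hsp.2 d le_rfl with h | h <;> simp [h]
  rw [_root_.iotaR, _root_.iotaR, ne_eq, mul_right_inj' hd, ne_comm,
    show d - k = d - 1 - k + 1 by omega, show d - (k + 1) = d - 1 - k by omega]

lemma type2_iff (hsp : IsSignPattern d sp) :
    Type2 d sp ↔ NoAlternatingTriple d (fun k => sp k ≠ sp (k + 1)) := by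
  constructor
  · rintro ⟨s, m, h, hm⟩
    exact (noAlternatingTriple_congr fun k hk => h.ne_succ_iff hk).2
      (IsType2Composition.noAlternatingTriple hm h.1 h.blockStart_eq)
  · intro hc
    obtain ⟨t, m, h⟩ := hsp.exists_isSigmaOf
    exact ⟨t + 1, m, h, isType2Composition_of_noAlternatingTriple h.1 h.blockStart_eq
      ((noAlternatingTriple_congr fun k hk => h.ne_succ_iff hk).1 hc)⟩

end IsSignPattern

/-- the involutions `ι_m` and `ι_r` preserve the set of type 2 sign
patterns of length `d+1`. -/
theorem iota_preserve_type2 (d : ℕ) (sp : ℕ → ℝ) (hsp : IsSignPattern d sp) :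
    (Type2 d sp ↔ Type2 d (iotaM sp)) ∧ (Type2 d sp ↔ Type2 d (iotaR d sp)) := by
  rw [hsp.type2_iff, hsp.iotaM.type2_iff, hsp.iotaR.type2_iff,
    noAlternatingTriple_congr fun k hk => hsp.iotaM_ne_succ_iff hk,
    noAlternatingTriple_congr fun k hk => hsp.iotaR_ne_succ_iff hk,
    noAlternatingTriple_not (c := fun k => sp k ≠ sp (k + 1)),
    noAlternatingTriple_rev_iff (c := fun k => sp k ≠ sp (k + 1))]
  exact ⟨Iff.rfl, Iff.rfl⟩
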